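/- arXiv:2009.10274 — 2 statements merged into one kernel-verified Lean document; each statement's English description precedes it below -/
import Mathlib

section
/- For positive definite matrices A, B and t ∈ [0,1], the weighted spectral geometric mean X = A ♮_t B is the unique positive definite solution of the equation (A^{-1} # B)^t = A^{-1} # X. -/
open scoped Matrix.Norms.L2Operator ComplexOrder

variable {n : Type*} [Fintype n] [DecidableEq n]

/-- Real power of a (Hermitian) matrix via the continuous functional calculus. -/
noncomputable def mpow (A : Matrix n n ℂ) (t : ℝ) : Matrix n n ℂ :=
  cfc (fun x : ℝ => x ^ t) A

/-- Matrix logarithm via the continuous functional calculus. -/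
noncomputable def mlog (A : Matrix n n ℂ) : Matrix n n ℂ :=
  cfc Real.log A

/-- The geometric mean `A # B = A^{1/2} (A^{-1/2} B A^{-1/2})^{1/2} A^{1/2}`. -/
noncomputable def geo (A B : Matrix n n ℂ) : Matrix n n ℂ :=
  mpow A (1/2) * mpow (mpow A (-(1/2)) * B * mpow A (-(1/2))) (1/2) * mpow A (1/2)

/-- The weighted geometric mean `A #ₜ B = A^{1/2} (A^{-1/2} B A^{-1/2})^t A^{1/2}`. -/
noncomputable def wgeo (t : ℝ) (A B : Matrix n n ℂ) : Matrix n n ℂ :=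
  mpow A (1/2) * mpow (mpow A (-(1/2)) * B * mpow A (-(1/2))) t * mpow A (1/2)

/-- The weighted spectral geometric mean `A ♮ₜ B = (A⁻¹ # B)^t A (A⁻¹ # B)^t`. -/
noncomputable def sgeo (t : ℝ) (A B : Matrix n n ℂ) : Matrix n n ℂ :=
  mpow (geo A⁻¹ B) t * A * mpow (geo A⁻¹ B) t

/-- Semi-metric `d(A,B) = 2 ‖log (A⁻¹ # B)‖` (operator norm). -/
noncomputable def dsm (A B : Matrix n n ℂ) : ℝ :=
  2 * ‖mlog (geo A⁻¹ B)‖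

/-- Loewner order: `Loewner A B` means `A ≤ B`, i.e. `B - A` is positive semidefinite. -/
def Loewner (A B : Matrix n n ℂ) : Prop := (B - A).PosSemidef

/-! With `S = A^{1/2}` we have `A⁻¹ # X = S⁻¹ (S X S)^{1/2} S⁻¹`, so `T = A⁻¹ # X` says that
`S T S` is the positive square root of `S X S`. By uniqueness of positive square roots this is
`(S T S)² = S X S`, i.e. `S (T A T) S = S X S`, i.e. `X = T A T`. -/

theorem conj_eq_iff_eq_conj {M : Type*} [Monoid M] {u v y z : M} (huv : u * v = 1)
    (hvu : v * u = 1) : u * y * u = z ↔ y = v * z * v := by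
  constructor <;> rintro rfl <;> simp only [mul_assoc, huv, hvu, mul_one] <;>
    simp only [← mul_assoc, huv, hvu, one_mul]

namespace CFC

variable {A : Type*} [CStarAlgebra A] [PartialOrder A] [StarOrderedRing A]

theorem eq_rpow_neg_half_conj_iff {a t x : A} (ha : IsStrictlyPositive a) (ht : 0 ≤ t)
    (hx : 0 ≤ x) :
    t = a ^ (-(1 / 2) : ℝ) * (a ^ (1 / 2 : ℝ) * x * a ^ (1 / 2 : ℝ)) ^ (1 / 2 : ℝ) *
        a ^ (-(1 / 2) : ℝ) ↔ x = t * a * t := by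
  set r := a ^ (1 / 2 : ℝ)
  have hr : IsSelfAdjoint r := rpow_nonneg.isSelfAdjoint
  have hru : IsUnit r := (IsStrictlyPositive.rpow a _ ha).isUnit
  have hrr : r * r = a := by simpa only [sqrt_eq_rpow] using sqrt_mul_sqrt_self a ha.nonneg
  have hrs : r * a ^ (-(1 / 2) : ℝ) = 1 := rpow_mul_rpow_neg _
  have hsr : a ^ (-(1 / 2) : ℝ) * r = 1 := rpow_neg_mul_rpow _
  calc t = _ * _ * _ ↔ r * t * r = sqrt (r * x * r) := by
        rw [sqrt_eq_rpow, conj_eq_iff_eq_conj hrs hsr]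
    _ ↔ r * (t * a * t) * r = r * x * r := by
        rw [eq_comm, sqrt_eq_iff _ _ (hr.conjugate_nonneg hx) (hr.conjugate_nonneg ht), ← hrr]
        simp only [mul_assoc]
    _ ↔ x = t * a * t := by
        rw [hru.mul_left_inj, hru.mul_right_inj, eq_comm]

end CFC

open scoped MatrixOrder
open Matrix

section

variable {A B : Matrix n n ℂ}

lemma mpow_eq_rpow (hA : A.PosSemidef) (t : ℝ) : mpow A t = A ^ t :=
  (CFC.rpow_eq_cfc_real hA.nonneg).symm

lemma mpow_posDef (hA : A.PosDef) (t : ℝ) : (mpow A t).PosDef := by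
  rw [mpow_eq_rpow hA.posSemidef, ← isStrictlyPositive_iff_posDef]
  exact IsStrictlyPositive.rpow A t hA.isStrictlyPositive

lemma mpow_inv (hA : A.PosDef) (t : ℝ) : mpow A⁻¹ t = A ^ (-t) := by
  lift A to (Matrix n n ℂ)ˣ using hA.isUnit
  rw [mpow_eq_rpow hA.inv.posSemidef, CFC.rpow_neg _ _ hA.posSemidef.nonneg, coe_units_inv]

lemma geo_posDef (hA : A.PosDef) (hB : B.PosDef) : (geo A B).PosDef := by
  have hA' := hA.isStrictlyPositive
  have hB' := hB.isStrictlyPositive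
  rw [← isStrictlyPositive_iff_posDef, geo, mpow_eq_rpow hA.posSemidef,
    mpow_eq_rpow hA.posSemidef, mpow_eq_rpow]
  · cfc_tac
  · exact CFC.rpow_nonneg.isSelfAdjoint.conjugate_nonneg hB.posSemidef.nonneg |>.posSemidef

lemma geo_inv_eq (hA : A.PosDef) (hB : B.PosSemidef) :
    geo A⁻¹ B = A ^ (-(1 / 2) : ℝ) * (A ^ (1 / 2 : ℝ) * B * A ^ (1 / 2 : ℝ)) ^ (1 / 2 : ℝ) *
      A ^ (-(1 / 2) : ℝ) := by
  have : 0 ≤ A ^ (1 / 2 : ℝ) * B * A ^ (1 / 2 : ℝ) :=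
    CFC.rpow_nonneg.isSelfAdjoint.conjugate_nonneg hB.nonneg
  rw [geo, mpow_inv hA, mpow_inv hA, neg_neg, mpow_eq_rpow this.posSemidef]

lemma eq_geo_inv_iff {T X : Matrix n n ℂ} (hA : A.PosDef) (hT : T.PosSemidef)
    (hX : X.PosSemidef) : T = geo A⁻¹ X ↔ X = T * A * T := by
  rw [geo_inv_eq hA hX]
  exact CFC.eq_rpow_neg_half_conj_iff hA.isStrictlyPositive hT.nonneg hX.nonneg

end

theorem stmt7_general (A B : Matrix n n ℂ) (hA : A.PosDef) (hB : B.PosDef)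
    {t : ℝ} :
    (sgeo t A B).PosDef ∧ mpow (geo A⁻¹ B) t = geo A⁻¹ (sgeo t A B) ∧
      ∀ X : Matrix n n ℂ, X.PosDef → mpow (geo A⁻¹ B) t = geo A⁻¹ X →
        X = sgeo t A B := by
  have hT := mpow_posDef (geo_posDef hA.inv hB) t
  have hsgeo : (sgeo t A B).PosDef := by
    rw [sgeo, ← isStrictlyPositive_iff_posDef]
    exact IsStrictlyPositive.conjugate_of_isUnit_of_isSelfAdjoint _ _ hT.isUnit hT.1
      hA.isStrictlyPositive
  refine ⟨hsgeo, (eq_geo_inv_iff hA hT.posSemidef hsgeo.posSemidef).mpr rfl, fun X hX h => ?_⟩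
  exact (eq_geo_inv_iff hA hT.posSemidef hX.posSemidef).mp h

/-- `A ♮ₜ B` is the unique positive definite solution `X` of
`(A⁻¹ # B)^t = A⁻¹ # X`. -/
theorem stmt7 (A B : Matrix n n ℂ) (hA : A.PosDef) (hB : B.PosDef)
    {t : ℝ} (ht : t ∈ Set.Icc (0:ℝ) 1) :
    (sgeo t A B).PosDef ∧ mpow (geo A⁻¹ B) t = geo A⁻¹ (sgeo t A B) ∧
      ∀ X : Matrix n n ℂ, X.PosDef → mpow (geo A⁻¹ B) t = geo A⁻¹ X →
        X = sgeo t A B :=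
  stmt7_general A B hA hB
end

section
/- Let A, B be 2×2 positive definite Hermitian matrices with det A = det B = 1. Then for t ∈ [0,1], the weighted spectral geometric mean satisfies A ♮_t B = (A^{-1} + B)^t A (A^{-1} + B)^t / (2 + tr(AB))^t. -/
open scoped Matrix.Norms.L2Operator ComplexOrder

variable {n : Type*} [Fintype n] [DecidableEq n]

/-!
The geometric mean `A # B` is the unique positive solution `X` of the Riccati equation
`X A⁻¹ X = B`: with `T = A^{-1/2}`, `T B T` is the square of the positive matrix `T X T`.
For `2 × 2` matrices of determinant one, Cayley–Hamilton applied to `A⁻¹ B` gives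
`(A + B) A⁻¹ (A + B) = det (A + B) • B`, so `A # B = (A + B) / √(det (A + B))`.
Applied to `A⁻¹` and `B`, where `det (A⁻¹ + B) = 2 + tr (A B)`, the scalar factor of
`A⁻¹ # B` comes out of the power `(A⁻¹ # B)^t` as `(2 + tr (A B))^{-t/2}` on each side.
-/

open scoped MatrixOrder

namespace Matrix

variable {A : Matrix n n ℂ}

lemma PosSemidef.mpow_eq_rpow (hA : A.PosSemidef) (t : ℝ) : mpow A t = A ^ t :=
  (CFC.rpow_eq_cfc_real hA.nonneg).symm

lemma PosSemidef.mpow_smul (hA : A.PosSemidef) {c : ℝ} (hc : 0 ≤ c) (t : ℝ) :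
    mpow (c • A) t = c ^ t • mpow A t := by
  have hfin := A.finite_real_spectrum
  calc mpow (c • A) t = cfc (fun x : ℝ => (c • x) ^ t) A :=
        (cfc_comp_smul c (fun x : ℝ => x ^ t) A ((hfin.image _).continuousOn _)
          hA.isHermitian).symm
    _ = cfc (fun x : ℝ => c ^ t • x ^ t) A := cfc_congr fun x hx => ?_
    _ = c ^ t • mpow A t := cfc_smul _ _ A (hfin.continuousOn _)
  simp only [smul_eq_mul, Real.mul_rpow hc (spectrum_nonneg_of_nonneg hA.nonneg hx)]

lemma PosDef.rpow_neg_one (hA : A.PosDef) : A ^ (-1 : ℝ) = A⁻¹ := by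
  have := hA.isStrictlyPositive
  rw [← CFC.inverse_eq_rpow_neg_one, nonsing_inv_eq_ringInverse]

lemma PosDef.re_det_pos (hA : A.PosDef) : 0 < A.det.re :=
  (Complex.pos_iff.mp hA.det_pos).1

lemma PosDef.ofReal_re_det (hA : A.PosDef) : (A.det.re : ℂ) = A.det :=
  (Complex.eq_re_of_ofReal_le (r := 0) (by simpa using hA.det_pos.le)).symm

end Matrix

lemma geo_eq_of_mul_inv_mul_eq {A B X : Matrix n n ℂ} (hA : A.PosDef) (hX : X.PosSemidef)
    (h : X * A⁻¹ * X = B) : geo A B = X := by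
  have := hA.isStrictlyPositive
  set S := A ^ (1 / 2 : ℝ)
  set T := A ^ (-(1 / 2) : ℝ)
  have hTS : T * S = 1 := CFC.rpow_neg_mul_rpow _
  have hST : S * T = 1 := CFC.rpow_mul_rpow_neg _
  have hTT : T * T = A⁻¹ := by
    rw [← CFC.rpow_add hA.isUnit, ← hA.rpow_neg_one]; norm_num
  have hTXT : 0 ≤ T * X * T :=
    (IsStrictlyPositive.rpow A _).isSelfAdjoint.conjugate_nonneg hX.nonneg
  have hsq : T * B * T = (T * X * T) * (T * X * T) := by
    rw [← h, ← hTT]; simp only [mul_assoc]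
  have hsq_nonneg : 0 ≤ (T * X * T) * (T * X * T) := hTXT.isSelfAdjoint.mul_self_nonneg
  rw [geo, hA.posSemidef.mpow_eq_rpow, hA.posSemidef.mpow_eq_rpow, hsq,
    (Matrix.nonneg_iff_posSemidef.mp hsq_nonneg).mpow_eq_rpow, ← CFC.sqrt_eq_rpow (a := _ * _),
    CFC.sqrt_mul_self _ hTXT]
  calc S * (T * X * T) * S = (S * T) * X * (T * S) := by simp only [mul_assoc]
    _ = X := by rw [hST, hTS, one_mul, mul_one]

namespace Matrix

variable {R : Type*} [CommRing R] {A B : Matrix (Fin 2) (Fin 2) R}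

lemma mul_self_fin_two (M : Matrix (Fin 2) (Fin 2) R) : M * M = M.trace • M - M.det • 1 := by
  ext i j
  fin_cases i <;> fin_cases j <;>
    simp [mul_apply, Fin.sum_univ_two, det_fin_two, trace_fin_two] <;> ring

lemma det_inv_add_fin_two (B : Matrix (Fin 2) (Fin 2) R) (hA : A.det = 1) :
    (A⁻¹ + B).det = 1 + (A * B).trace + B.det := by
  have hinv : A⁻¹ = A.adjugate := by rw [inv_def, hA, Ring.inverse_one, one_smul]
  rw [hinv, det_fin_two, det_fin_two, adjugate_fin_two, trace_fin_two]
  rw [det_fin_two] at hA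
  simp only [Fin.isValue, add_apply, of_apply, cons_val', cons_val_zero, cons_val_fin_one,
    cons_val_one, mul_apply, Fin.sum_univ_two]
  linear_combination hA

lemma add_mul_inv_mul_add_fin_two (hA : A.det = 1) (hB : B.det = 1) :
    (A + B) * A⁻¹ * (A + B) = (A + B).det • B := by
  have hunit : IsUnit A.det := by simp [hA]
  have hdet : (A + B).det = 2 + (A⁻¹ * B).trace := by
    have h := det_inv_add_fin_two (A := A⁻¹) B (by simp [hA])
    rwa [nonsing_inv_nonsing_inv A hunit, hB, add_right_comm, one_add_one_eq_two] at h
  have hAA : A * A⁻¹ = 1 := A.mul_nonsing_inv hunit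
  have hBAB : B * A⁻¹ * B = (A⁻¹ * B).trace • B - A := by
    have h := congrArg (A * ·) (mul_self_fin_two (A⁻¹ * B))
    simp only [det_mul, det_nonsing_inv, hA, hB, Ring.inverse_one, mul_one, one_smul, mul_sub,
      mul_smul_comm, ← mul_assoc, hAA, one_mul] at h
    simpa only [mul_assoc] using h
  calc (A + B) * A⁻¹ * (A + B) = A + (2 : R) • B + B * A⁻¹ * B := by
        simp only [add_mul, mul_add, hAA, A.nonsing_inv_mul hunit, one_mul, mul_one, mul_assoc,
          two_smul]
        abel
    _ = (A + B).det • B := by rw [hBAB, hdet, add_smul]; abel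

end Matrix

lemma geo_fin_two {A B : Matrix (Fin 2) (Fin 2) ℂ} (hA : A.PosDef) (hB : B.PosDef)
    (hdA : A.det = 1) (hdB : B.det = 1) :
    geo A B = (A + B).det.re ^ (-(1 / 2) : ℝ) • (A + B) := by
  have hAB := hA.add hB
  set r := (A + B).det.re
  have hr : 0 < r := hAB.re_det_pos
  refine geo_eq_of_mul_inv_mul_eq hA (hAB.posSemidef.smul (Real.rpow_nonneg hr.le _)) ?_
  have hscalar : r ^ (-(1 / 2) : ℝ) * r ^ (-(1 / 2) : ℝ) * r = 1 := by
    rw [← Real.rpow_add hr, ← Real.rpow_add_one hr.ne']; norm_num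
  rw [smul_mul_assoc, smul_mul_assoc, mul_smul_comm, smul_smul,
    Matrix.add_mul_inv_mul_add_fin_two hdA hdB, ← hAB.ofReal_re_det, Complex.coe_smul, smul_smul,
    hscalar, one_smul]

theorem stmt17_general (A B : Matrix (Fin 2) (Fin 2) ℂ) (hA : A.PosDef) (hB : B.PosDef)
    (hdA : A.det = 1) (hdB : B.det = 1) {t : ℝ} :
    sgeo t A B = (((2 : ℂ) + (A * B).trace) ^ (t : ℂ))⁻¹ •
      (mpow (A⁻¹ + B) t * A * mpow (A⁻¹ + B) t) := by
  have hN : (A⁻¹ + B).PosDef := hA.inv.add hB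
  have hdet : (A⁻¹ + B).det = 2 + (A * B).trace := by
    rw [Matrix.det_inv_add_fin_two B hdA, hdB, add_right_comm, one_add_one_eq_two]
  set r := (A⁻¹ + B).det.re
  have hr : 0 < r := hN.re_det_pos
  have hscalar : (r ^ (-(1 / 2) : ℝ)) ^ t * (r ^ (-(1 / 2) : ℝ)) ^ t = (r ^ t)⁻¹ := by
    rw [← Real.rpow_add (by positivity), ← Real.rpow_mul hr.le, ← Real.rpow_neg hr.le]
    ring_nf
  rw [sgeo, geo_fin_two hA.inv hB (by simp [hdA]) hdB,
    hN.posSemidef.mpow_smul (Real.rpow_nonneg hr.le _), smul_mul_assoc, smul_mul_assoc,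
    mul_smul_comm, smul_smul, hscalar, ← hdet, ← hN.ofReal_re_det,
    ← Complex.ofReal_cpow hr.le, ← Complex.ofReal_inv, Complex.coe_smul]

/-- for `2 × 2` positive definite matrices of determinant one,
`A ♮ₜ B = (A⁻¹ + B)^t A (A⁻¹ + B)^t / (2 + tr(AB))^t`. -/
theorem stmt17 (A B : Matrix (Fin 2) (Fin 2) ℂ) (hA : A.PosDef) (hB : B.PosDef)
    (hdA : A.det = 1) (hdB : B.det = 1) {t : ℝ} (ht : t ∈ Set.Icc (0:ℝ) 1) :
    sgeo t A B = (((2 : ℂ) + (A * B).trace) ^ (t : ℂ))⁻¹ •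
      (mpow (A⁻¹ + B) t * A * mpow (A⁻¹ + B) t) :=
  stmt17_general A B hA hB hdA hdB
end
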